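/- Let f : [0,T] × ℝ × ℝ → ℝ be continuously differentiable, 2π-periodic in x, compactly supported in v, and let E : [0,T] × ℝ → ℝ be continuously differentiable and 2π-periodic in x. Assume f satisfies the Vlasov equation ∂f/∂t + v ∂f/∂x − E(t,x) ∂f/∂v = 0 and E satisfies the Ampère law ∂E/∂t(t,x) = ∫_ℝ v f(t,x,v) dv (obtained by differentiating ∂E/∂x = 1 − ρ in time and using the Vlasov equation, with zero integration constant). Then the total energy 𝓔(t) = (1/2) ∫₀^{2π} ∫_ℝ v² f(t,x,v) dv dx + (1/2) ∫₀^{2π} E(t,x)² dx is constant on [0,T]. -/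

import Mathlib

/-!
Differentiating under the integral sign and using the Vlasov equation, an integration by parts in
`v` and Ampère's law `∫ v f dv = ∂ₜE`, the time derivative of `∫∫ v² f` becomes `-∫ 2 E ∂ₜE`, which
cancels that of `∫ E²`, plus the `x`-integral of an `x`-derivative, which vanishes by periodicity.

Differentiating under the integral needs the `v`-supports of `f` to be bounded uniformly in
`(t, x)`, whereas the hypotheses bound them only pointwise. By Baire's theorem there is a time
window `[a, b]` on which the supports of `f (t, 0, ·)` lie in `|v| < N`. `f` is constant along the
characteristics `X' = V, V' = -E(t, X)`, and along each of them `V` moves by at most `M T`, where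
`|E| ≤ M`. A characteristic starting at speed `|v| ≥ N + M T + 2π / (b - a)` therefore meets
`2πℤ × {|v| ≥ N}` during `[a, b]`, where `f` vanishes.
-/

open MeasureTheory Set Filter Function Metric
open scoped NNReal

theorem abs_sub_le_of_abs_deriv_le {g g' : ℝ → ℝ} {T M s t : ℝ}
    (hg : ∀ r ∈ Icc 0 T, HasDerivWithinAt g (g' r) (Icc 0 T) r)
    (hM : ∀ r ∈ Icc 0 T, |g' r| ≤ M) (hs : s ∈ Icc 0 T) (ht : t ∈ Icc 0 T) :
    |g t - g s| ≤ M * T := by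
  have hM₀ : 0 ≤ M := (abs_nonneg _).trans (hM s hs)
  calc |g t - g s| ≤ M * |t - s| := by
        simpa only [Real.norm_eq_abs] using
          (convex_Icc 0 T).norm_image_sub_le_of_norm_hasDerivWithin_le hg hM hs ht
    _ ≤ M * T := mul_le_mul_of_nonneg_left
        (abs_sub_le_iff.2 ⟨by linarith [ht.2, hs.1], by linarith [ht.1, hs.2]⟩) hM₀

theorem eq_of_hasDerivWithinAt_zero {g : ℝ → ℝ} {T s t : ℝ}
    (hg : ∀ r ∈ Icc 0 T, HasDerivWithinAt g 0 (Icc 0 T) r) (hs : s ∈ Icc 0 T)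
    (ht : t ∈ Icc 0 T) : g t = g s := by
  have := abs_sub_le_of_abs_deriv_le hg (fun _ _ => abs_zero.le) hs ht
  rwa [zero_mul, abs_nonpos_iff, sub_eq_zero] at this

theorem exists_int_mul_mem_uIcc {p x y : ℝ} (hp : 0 < p) (hxy : p ≤ |y - x|) :
    ∃ k : ℤ, k * p ∈ uIcc x y := by
  have hspan : max x y - min x y = |y - x| := by rw [max_sub_min_eq_abs', abs_sub_comm]
  have hceil : ((⌈min x y / p⌉ : ℤ) - 1 : ℝ) * p < min x y :=
    (lt_div_iff₀ hp).1 (by linarith [Int.ceil_lt_add_one (min x y / p)])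
  exact ⟨⌈min x y / p⌉, (div_le_iff₀ hp).1 (Int.le_ceil _), by linarith⟩

theorem exists_bound_of_continuous_of_periodic {g : ℝ → ℝ → ℝ} {p T : ℝ} (hp : 0 < p)
    (hg : Continuous (uncurry g)) (hper : ∀ t, Periodic (g t) p) :
    ∃ M, ∀ t ∈ Icc 0 T, ∀ x, |g t x| ≤ M := by
  obtain ⟨M, hM⟩ := (isCompact_Icc (a := 0) (b := T)).prod (isCompact_Icc (a := 0) (b := p))
    |>.exists_bound_of_continuousOn hg.continuousOn
  refine ⟨M, fun t ht x => ?_⟩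
  obtain ⟨y, hy, hxy⟩ := (hper t).exists_mem_Ico₀ hp x
  rw [hxy]
  exact hM (t, y) ⟨ht, Ico_subset_Icc_self hy⟩

theorem hasDerivAt_intervalIntegral_of_continuous {G D : ℝ → ℝ → ℝ} {a b : ℝ}
    (hG : Continuous (uncurry G)) (hD : Continuous (uncurry D))
    (hderiv : ∀ t x, HasDerivAt (G · x) (D t x) t) (t₀ : ℝ) :
    HasDerivAt (fun t => ∫ x in a..b, G t x) (∫ x in a..b, D t₀ x) t₀ := by
  obtain ⟨C, hC⟩ := (isCompact_closedBall t₀ 1).prod isCompact_uIcc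
    |>.exists_bound_of_continuousOn hD.continuousOn
  have hG_slice : ∀ t, Continuous (G t) := fun t => hG.comp (Continuous.prodMk_right t)
  refine (intervalIntegral.hasDerivAt_integral_of_dominated_loc_of_deriv_le
    (bound := fun _ => C) (ball_mem_nhds t₀ one_pos)
    (Eventually.of_forall fun t => (hG_slice t).aestronglyMeasurable)
    ((hG_slice t₀).intervalIntegrable a b)
    (hD.comp (Continuous.prodMk_right t₀)).aestronglyMeasurable
    (Eventually.of_forall fun x hx t ht =>
      hC (t, x) ⟨ball_subset_closedBall ht, uIoc_subset_uIcc hx⟩)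
    intervalIntegrable_const (Eventually.of_forall fun x _ t _ => hderiv t x)).2

theorem hasDerivAt_intervalIntegral_intervalIntegral_of_continuous {G D : ℝ → ℝ → ℝ → ℝ}
    {a b c d : ℝ} (hG : Continuous fun p : ℝ × ℝ × ℝ => G p.1 p.2.1 p.2.2)
    (hD : Continuous fun p : ℝ × ℝ × ℝ => D p.1 p.2.1 p.2.2)
    (hderiv : ∀ t x v, HasDerivAt (G · x v) (D t x v) t) (t₀ : ℝ) :
    HasDerivAt (fun t => ∫ x in a..b, ∫ v in c..d, G t x v)
      (∫ x in a..b, ∫ v in c..d, D t₀ x v) t₀ := by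
  have hassoc : Continuous fun q : (ℝ × ℝ) × ℝ => (q.1.1, q.1.2, q.2) := by fun_prop
  have hslice : ∀ x : ℝ, Continuous fun q : ℝ × ℝ => (q.1, x, q.2) := fun x => by fun_prop
  exact hasDerivAt_intervalIntegral_of_continuous (G := fun t x => ∫ v in c..d, G t x v)
    (D := fun t x => ∫ v in c..d, D t x v)
    (intervalIntegral.continuous_parametric_intervalIntegral_of_continuous'
      (f := fun (p : ℝ × ℝ) v => G p.1 p.2 v) (hG.comp hassoc) c d)
    (intervalIntegral.continuous_parametric_intervalIntegral_of_continuous'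
      (f := fun (p : ℝ × ℝ) v => D p.1 p.2 v) (hD.comp hassoc) c d)
    (fun t x => hasDerivAt_intervalIntegral_of_continuous (G := fun t v => G t x v)
      (D := fun t v => D t x v) (hG.comp (hslice x)) (hD.comp (hslice x)) (hderiv · x) t) t₀

theorem integral_eq_intervalIntegral_of_forall_le_abs {g : ℝ → ℝ} {R : ℝ}
    (hg : ∀ v, R ≤ |v| → g v = 0) : ∫ v, g v = ∫ v in -R..R, g v := by
  rcases lt_or_ge R 0 with hR | hR
  · have : g = 0 := funext fun v => hg v (hR.le.trans (abs_nonneg v))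
    simp [this]
  rw [intervalIntegral.integral_of_le (by linarith)]
  refine (setIntegral_eq_integral_of_forall_compl_eq_zero fun v hv => hg v ?_).symm
  rcases le_or_gt v (-R) with h | h
  · exact (le_neg.1 h).trans (neg_le_abs v)
  · exact (lt_of_not_ge fun h' => hv ⟨h, h'⟩).le.trans (le_abs_self v)

theorem integral_sq_mul_deriv_eq {g g' : ℝ → ℝ} {R : ℝ} (hg : ∀ v, HasDerivAt g (g' v) v)
    (hg' : Continuous g') (hgR : g (-R) = 0) (hgR' : g R = 0) :
    ∫ v in -R..R, v ^ 2 * g' v = -(2 * ∫ v in -R..R, v * g v) := by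
  rw [intervalIntegral.integral_mul_deriv_eq_deriv_mul (u' := fun v => 2 * v)
    (fun v _ => by simpa using hasDerivAt_pow 2 v) (fun v _ => hg v)
    ((continuous_const_mul 2).intervalIntegrable _ _) (hg'.intervalIntegrable _ _), hgR, hgR',
    ← intervalIntegral.integral_const_mul]
  simp only [mul_zero, sub_zero, zero_sub, ← mul_assoc]

theorem Function.Periodic.intervalIntegral_deriv_eq_zero {J J' : ℝ → ℝ} {p : ℝ}
    (hJ : Periodic J p) (hderiv : ∀ x, HasDerivAt J (J' x) x) (hJ' : Continuous J') :
    ∫ x in 0..p, J' x = 0 := by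
  rw [intervalIntegral.integral_eq_sub_of_hasDerivAt (fun x _ => hderiv x)
    (hJ'.intervalIntegrable _ _), ← zero_add p, hJ 0, sub_self]

theorem continuous_deriv_fst_of_contDiff {E : ℝ → ℝ → ℝ}
    (hE : ContDiff ℝ 1 fun p : ℝ × ℝ => E p.1 p.2) :
    Continuous fun p : ℝ × ℝ => deriv (fun r => E r p.2) p.1 := by
  have hderiv : ∀ s x,
      deriv (fun r => E r x) s = fderiv ℝ (fun p : ℝ × ℝ => E p.1 p.2) (s, x) (1, 0) :=
    fun s x => ((hE.differentiable one_ne_zero _).hasFDerivAt.comp_hasDerivAt s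
      ((hasDerivAt_id s).prodMk (hasDerivAt_const s x))).deriv
  simp only [hderiv]
  exact (hE.continuous_fderiv one_ne_zero).clm_apply continuous_const

theorem hasDerivAt_intervalIntegral_sq {E : ℝ → ℝ → ℝ}
    (hE : ContDiff ℝ 1 fun p : ℝ × ℝ => E p.1 p.2) (a b t : ℝ) :
    HasDerivAt (fun s => ∫ x in a..b, E s x ^ 2)
      (∫ x in a..b, 2 * E t x * deriv (fun r => E r x) t) t := by
  refine hasDerivAt_intervalIntegral_of_continuous (G := fun s x => E s x ^ 2)
    (D := fun s x => 2 * E s x * deriv (fun r => E r x) s) ?_ ?_ (fun s x => ?_) t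
  · exact hE.continuous.pow 2
  · exact (continuous_const.mul hE.continuous).mul (continuous_deriv_fst_of_contDiff hE)
  · have hslice : HasDerivAt (fun r => E r x) (deriv (fun r => E r x) s) s :=
      ((hE.differentiable one_ne_zero _).comp s
        (by fun_prop : DifferentiableAt ℝ (fun r : ℝ => (r, x)) s)).hasDerivAt
    simpa using hslice.fun_pow 2

section PartialDerivatives

variable (f : ℝ → ℝ → ℝ → ℝ)

noncomputable def partialT (t x v : ℝ) : ℝ := deriv (fun s => f s x v) t

noncomputable def partialX (t x v : ℝ) : ℝ := deriv (fun y => f t y v) x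

noncomputable def partialV (t x v : ℝ) : ℝ := deriv (fun w => f t x w) v

variable {f} (hf : ContDiff ℝ 1 fun p : ℝ × ℝ × ℝ => f p.1 p.2.1 p.2.2)
include hf

theorem partialT_eq_fderiv (t x v : ℝ) :
    partialT f t x v = fderiv ℝ (fun p : ℝ × ℝ × ℝ => f p.1 p.2.1 p.2.2) (t, x, v) (1, 0, 0) :=
  ((hf.differentiable one_ne_zero _).hasFDerivAt.comp_hasDerivAt t
    ((hasDerivAt_id t).prodMk ((hasDerivAt_const t x).prodMk (hasDerivAt_const t v)))).deriv

theorem partialX_eq_fderiv (t x v : ℝ) :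
    partialX f t x v = fderiv ℝ (fun p : ℝ × ℝ × ℝ => f p.1 p.2.1 p.2.2) (t, x, v) (0, 1, 0) :=
  ((hf.differentiable one_ne_zero _).hasFDerivAt.comp_hasDerivAt x
    ((hasDerivAt_const x t).prodMk ((hasDerivAt_id x).prodMk (hasDerivAt_const x v)))).deriv

theorem partialV_eq_fderiv (t x v : ℝ) :
    partialV f t x v = fderiv ℝ (fun p : ℝ × ℝ × ℝ => f p.1 p.2.1 p.2.2) (t, x, v) (0, 0, 1) :=
  ((hf.differentiable one_ne_zero _).hasFDerivAt.comp_hasDerivAt v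
    ((hasDerivAt_const v t).prodMk ((hasDerivAt_const v x).prodMk (hasDerivAt_id v)))).deriv

theorem hasDerivAt_partialT (t x v : ℝ) : HasDerivAt (fun s => f s x v) (partialT f t x v) t :=
  ((hf.differentiable one_ne_zero _).comp t
    (by fun_prop : DifferentiableAt ℝ (fun s : ℝ => (s, x, v)) t)).hasDerivAt

theorem hasDerivAt_partialX (t x v : ℝ) : HasDerivAt (fun y => f t y v) (partialX f t x v) x :=
  ((hf.differentiable one_ne_zero _).comp x
    (by fun_prop : DifferentiableAt ℝ (fun y : ℝ => (t, y, v)) x)).hasDerivAt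

theorem hasDerivAt_partialV (t x v : ℝ) : HasDerivAt (fun w => f t x w) (partialV f t x v) v :=
  ((hf.differentiable one_ne_zero _).comp v
    (by fun_prop : DifferentiableAt ℝ (fun w : ℝ => (t, x, w)) v)).hasDerivAt

theorem continuous_partialT : Continuous fun p : ℝ × ℝ × ℝ => partialT f p.1 p.2.1 p.2.2 := by
  simp only [partialT_eq_fderiv hf]
  exact (hf.continuous_fderiv one_ne_zero).clm_apply continuous_const

theorem continuous_partialX : Continuous fun p : ℝ × ℝ × ℝ => partialX f p.1 p.2.1 p.2.2 := by
  simp only [partialX_eq_fderiv hf]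
  exact (hf.continuous_fderiv one_ne_zero).clm_apply continuous_const

theorem continuous_partialV : Continuous fun p : ℝ × ℝ × ℝ => partialV f p.1 p.2.1 p.2.2 := by
  simp only [partialV_eq_fderiv hf]
  exact (hf.continuous_fderiv one_ne_zero).clm_apply continuous_const

theorem HasDerivWithinAt.comp_curve {X V : ℝ → ℝ} {X' V' s : ℝ} {S : Set ℝ}
    (hX : HasDerivWithinAt X X' S s) (hV : HasDerivWithinAt V V' S s) :
    HasDerivWithinAt (fun r => f r (X r) (V r)) (partialT f s (X s) (V s) +
      X' * partialX f s (X s) (V s) + V' * partialV f s (X s) (V s)) S s := by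
  refine ((hf.differentiable one_ne_zero _).hasFDerivAt.comp_hasDerivWithinAt s
    ((hasDerivAt_id s).hasDerivWithinAt.prodMk (hX.prodMk hV))).congr_deriv ?_
  rw [partialT_eq_fderiv hf, partialX_eq_fderiv hf, partialV_eq_fderiv hf, ← smul_eq_mul X',
    ← smul_eq_mul V', ← map_smul, ← map_smul, ← map_add, ← map_add]
  congr 1
  ext <;> simp

end PartialDerivatives

theorem exists_characteristic {E : ℝ → ℝ → ℝ} {T M : ℝ} (hE : LocallyLipschitz (uncurry E))
    (hM : ∀ t ∈ Icc 0 T, ∀ x, |E t x| ≤ M) {t₀ : ℝ} (ht₀ : t₀ ∈ Icc 0 T) (x₀ v₀ : ℝ) :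
    ∃ X V : ℝ → ℝ, X t₀ = x₀ ∧ V t₀ = v₀ ∧ ∀ t ∈ Icc 0 T,
      HasDerivWithinAt X (V t) (Icc 0 T) t ∧ HasDerivWithinAt V (-E t (X t)) (Icc 0 T) t := by
  have hT : 0 ≤ T := ht₀.1.trans ht₀.2
  have hM₀ : 0 ≤ M := (abs_nonneg _).trans (hM t₀ ht₀ x₀)
  have hC : v₀ - M * T ≤ v₀ + M * T := by nlinarith
  -- Clamping the velocity to `[v₀ - M T, v₀ + M T]`, which it never leaves, bounds the field,
  -- so that Picard–Lindelöf applies on all of `[0, T]` at once.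
  let clamp : ℝ → ℝ := fun v => projIcc (v₀ - M * T) (v₀ + M * T) hC v
  let w : ℝ → ℝ × ℝ → ℝ × ℝ := fun t p => (clamp p.2, -E t p.1)
  let L : ℝ≥0 := ⟨|v₀| + M * T + M, by positivity⟩
  have hL : (L : ℝ) = |v₀| + M * T + M := rfl
  let a : ℝ≥0 := ⟨L * T, by positivity⟩
  obtain ⟨K, hK⟩ := hE.locallyLipschitzOn.exists_lipschitzOnWith_of_compact
    ((isCompact_Icc (a := 0) (b := T)).prod (isCompact_closedBall x₀ a))
  have hpl : IsPicardLindelof w ⟨t₀, ht₀⟩ (x₀, v₀) a 0 L (max 1 K) := by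
    refine ⟨fun t ht => ?_, fun p _ => ?_, fun t ht p _ => ?_, ?_⟩
    · have hmaps : MapsTo (Prod.mk t ∘ Prod.fst) (closedBall (x₀, v₀) a)
          (Icc 0 T ×ˢ closedBall x₀ a) :=
        fun p hp => ⟨ht, (closedBall_prod_same x₀ v₀ a ▸ hp).1⟩
      exact ((LipschitzWith.subtype_val _).comp (LipschitzWith.projIcc hC)
        |>.comp LipschitzWith.prod_snd).lipschitzOnWith.prodMk
        (hK.comp ((LipschitzWith.prodMk_left t).comp LipschitzWith.prod_fst).lipschitzOnWith
          hmaps).neg |>.weaken (by simp)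
    · exact (continuous_const.prodMk
        (hE.continuous.comp (Continuous.prodMk_left p.1)).neg).continuousOn
    · have hclamp : (w t p).1 ∈ Icc (v₀ - M * T) (v₀ + M * T) := (projIcc _ _ hC p.2).2
      rw [Prod.norm_def, Real.norm_eq_abs, Real.norm_eq_abs, abs_neg, hL]
      refine max_le (abs_le.2 ⟨?_, ?_⟩) ((hM t ht p.1).trans ?_) <;>
        linarith [neg_abs_le v₀, le_abs_self v₀, hclamp.1, hclamp.2]
    · refine (mul_le_mul_of_nonneg_left (max_le ?_ ?_) L.2).trans_eq (b := L * T)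
        (by simp [a]; rfl)
      · linarith [ht₀.1]
      · linarith [ht₀.2]
  obtain ⟨γ, hγ₀, hγ⟩ := hpl.exists_eq_forall_mem_Icc_hasDerivWithinAt₀
  have hV : ∀ t ∈ Icc 0 T, HasDerivWithinAt (fun s => (γ s).2) (-E t (γ t).1) (Icc 0 T) t :=
    fun t ht => (hγ t ht).snd
  refine ⟨fun s => (γ s).1, fun s => (γ s).2, congrArg Prod.fst hγ₀, congrArg Prod.snd hγ₀,
    fun t ht => ⟨?_, hV t ht⟩⟩
  have hVt : (γ t).2 ∈ Icc (v₀ - M * T) (v₀ + M * T) := by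
    have := abs_sub_le_of_abs_deriv_le hV
      (fun r hr => (abs_neg (E r _)).trans_le (hM r hr _)) ht₀ ht
    rw [show (γ t₀).2 = v₀ from congrArg Prod.snd hγ₀] at this
    exact ⟨by linarith [(abs_le.1 this).1], by linarith [(abs_le.1 this).2]⟩
  have hX : HasDerivWithinAt (fun s => (γ s).1) (clamp (γ t).2) (Icc 0 T) t := (hγ t ht).fst
  rwa [show clamp (γ t).2 = (γ t).2 from congrArg Subtype.val (projIcc_of_mem hC hVt)] at hX

theorem eq_of_vlasov_characteristic {f : ℝ → ℝ → ℝ → ℝ} {E : ℝ → ℝ → ℝ} {T : ℝ}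
    (hf : ContDiff ℝ 1 fun p : ℝ × ℝ × ℝ => f p.1 p.2.1 p.2.2)
    (hVlasov : ∀ t ∈ Icc 0 T, ∀ x v,
      partialT f t x v + v * partialX f t x v - E t x * partialV f t x v = 0)
    {X V : ℝ → ℝ} (hXV : ∀ t ∈ Icc 0 T,
      HasDerivWithinAt X (V t) (Icc 0 T) t ∧ HasDerivWithinAt V (-E t (X t)) (Icc 0 T) t)
    {s t : ℝ} (hs : s ∈ Icc 0 T) (ht : t ∈ Icc 0 T) :
    f t (X t) (V t) = f s (X s) (V s) :=
  eq_of_hasDerivWithinAt_zero (fun r hr =>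
    ((hXV r hr).1.comp_curve hf (hXV r hr).2).congr_deriv
      (by linarith [hVlasov r hr (X r) (V r)])) hs ht

theorem exists_mem_Icc_eq_int_mul {X V : ℝ → ℝ} {a b v₀ D p : ℝ} (hab : a ≤ b)
    (hX : ∀ s ∈ Icc a b, HasDerivWithinAt X (V s) (Icc a b) s)
    (hV : ∀ s ∈ Icc a b, |V s - v₀| ≤ D) (hp : 0 < p) (hsweep : p ≤ (|v₀| - D) * (b - a)) :
    ∃ s ∈ Icc a b, ∃ k : ℤ, X s = k * p := by
  have hdrift : |X b - b * v₀ - (X a - a * v₀)| ≤ D * (b - a) := by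
    have := (convex_Icc a b).norm_image_sub_le_of_norm_hasDerivWithin_le
      (f := fun s => X s - s * v₀)
      (fun s hs => (hX s hs).sub (hasDerivAt_mul_const v₀).hasDerivWithinAt)
      hV (left_mem_Icc.2 hab) (right_mem_Icc.2 hab)
    simpa only [Real.norm_eq_abs, abs_of_nonneg (sub_nonneg.2 hab)] using this
  have hmove : p ≤ |X b - X a| := by
    have hspeed : |v₀ * (b - a)| = |v₀| * (b - a) := by
      rw [abs_mul, abs_of_nonneg (sub_nonneg.2 hab)]
    have htriangle := abs_sub_abs_le_abs_sub (v₀ * (b - a)) (X b - X a)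
    rw [← abs_neg (v₀ * (b - a) - _),
      show -(v₀ * (b - a) - (X b - X a)) = X b - b * v₀ - (X a - a * v₀) by ring] at htriangle
    nlinarith
  obtain ⟨k, hk⟩ := exists_int_mul_mem_uIcc hp hmove
  have hXcont : ContinuousOn X (uIcc a b) := by
    rw [uIcc_of_le hab]
    exact fun s hs => (hX s hs).continuousWithinAt
  obtain ⟨s, hs, hXs⟩ := intermediate_value_uIcc hXcont hk
  exact ⟨s, uIcc_of_le hab ▸ hs, k, hXs⟩

theorem exists_Icc_uniform_support {g : ℝ → ℝ → ℝ} {a b : ℝ} (hab : a < b)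
    (hg : Continuous (uncurry g)) (hsupp : ∀ t, HasCompactSupport (g t)) :
    ∃ c d : ℝ, ∃ N : ℕ, a ≤ c ∧ c < d ∧ d ≤ b ∧
      ∀ t ∈ Icc c d, ∀ v : ℝ, N ≤ |v| → g t v = 0 := by
  let F : ℕ → Set (Icc a b) := fun n => {t | ∀ v, (n : ℝ) ≤ |v| → g t v = 0}
  have hF : ∀ n, IsClosed (F n) := fun n => by
    simp only [F, ofPred_forall]
    exact isClosed_iInter fun v => isClosed_iInter fun _ =>
      isClosed_eq (hg.comp (continuous_subtype_val.prodMk continuous_const)) continuous_const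
  have hcover : ⋃ n, F n = univ := by
    refine eq_univ_of_forall fun t => mem_iUnion.2 ?_
    obtain ⟨r, hr⟩ := (hsupp t).isBounded.subset_closedBall 0
    refine ⟨⌈r⌉₊ + 1, fun v hv => image_eq_zero_of_notMem_tsupport fun hv' => ?_⟩
    have : |v| ≤ r := by simpa using hr hv'
    push_cast at hv
    linarith [Nat.le_ceil r]
  have ha : a ∈ Icc a b := left_mem_Icc.2 hab.le
  have hb : b ∈ Icc a b := right_mem_Icc.2 hab.le
  have : Nonempty (Icc a b) := ⟨⟨a, ha⟩⟩
  have : Nontrivial (Icc a b) := ⟨⟨a, ha⟩, ⟨b, hb⟩, fun h => hab.ne (congrArg Subtype.val h)⟩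
  obtain ⟨n, hn⟩ := nonempty_interior_of_iUnion_of_closed hF hcover
  obtain ⟨c, d, hcd, hIoo⟩ := isOpen_interior.exists_Ioo_subset hn
  have hIcc : Icc c d ⊆ F n := by
    rw [← closure_Ioo hcd.ne, (hF n).closure_subset_iff]
    exact hIoo.trans interior_subset
  exact ⟨c, d, n, c.2.1, hcd, d.2.2,
    fun t ht => @hIcc ⟨t, c.2.1.trans ht.1, ht.2.trans d.2.2⟩ ht⟩

theorem exists_uniform_velocity_support {f : ℝ → ℝ → ℝ → ℝ} {E : ℝ → ℝ → ℝ} {T : ℝ}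
    (hT : 0 < T) (hf : ContDiff ℝ 1 fun p : ℝ × ℝ × ℝ => f p.1 p.2.1 p.2.2)
    (hfper : ∀ t x v, f t (x + 2 * Real.pi) v = f t x v)
    (hsupp : ∀ t x, HasCompactSupport fun v => f t x v)
    (hE : ContDiff ℝ 1 fun p : ℝ × ℝ => E p.1 p.2)
    (hEper : ∀ t x, E t (x + 2 * Real.pi) = E t x)
    (hVlasov : ∀ t ∈ Icc 0 T, ∀ x v,
      partialT f t x v + v * partialX f t x v - E t x * partialV f t x v = 0) :
    ∃ R, ∀ t ∈ Icc 0 T, ∀ x v, R ≤ |v| → f t x v = 0 := by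
  obtain ⟨a, b, N, ha, hab, hb, hwindow⟩ := exists_Icc_uniform_support (g := (f · 0 ·)) hT
    (hf.continuous.comp (by fun_prop : Continuous fun p : ℝ × ℝ => (p.1, (0 : ℝ), p.2)))
    (hsupp · 0)
  obtain ⟨M, hM⟩ :=
    exists_bound_of_continuous_of_periodic (T := T) Real.two_pi_pos hE.continuous hEper
  have hsub : Icc a b ⊆ Icc 0 T := Icc_subset_Icc ha hb
  refine ⟨N + M * T + 2 * Real.pi / (b - a), fun t₀ ht₀ x₀ v₀ hv₀ => ?_⟩
  obtain ⟨X, V, hX₀, hV₀, hXV⟩ := exists_characteristic hE.locallyLipschitz hM ht₀ x₀ v₀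
  have hV : ∀ s ∈ Icc 0 T, |V s - v₀| ≤ M * T := fun s hs => hV₀ ▸
    abs_sub_le_of_abs_deriv_le (fun r hr => (hXV r hr).2)
      (fun r hr => (abs_neg (E r _)).trans_le (hM r hr _)) ht₀ hs
  have hwidth : 0 < 2 * Real.pi / (b - a) := div_pos Real.two_pi_pos (sub_pos.2 hab)
  have hsweep : 2 * Real.pi ≤ (|v₀| - M * T) * (b - a) := by
    rw [← div_mul_cancel₀ (2 * Real.pi) (sub_pos.2 hab).ne']
    exact mul_le_mul_of_nonneg_right (by linarith [N.cast_nonneg (α := ℝ)]) (sub_pos.2 hab).le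
  obtain ⟨s, hs, k, hXs⟩ := exists_mem_Icc_eq_int_mul hab.le
    (fun s hs => (hXV s (hsub hs)).1.mono hsub) (fun s hs => hV s (hsub hs))
    Real.two_pi_pos hsweep
  have hVs : N ≤ |V s| := by
    have := abs_sub_abs_le_abs_sub v₀ (V s)
    rw [abs_sub_comm] at this
    linarith [hV s (hsub hs)]
  have hper : Periodic (f s · (V s)) (2 * Real.pi) := (hfper s · _)
  calc f t₀ x₀ v₀ = f s (X s) (V s) := by
        rw [← hX₀, ← hV₀]
        exact eq_of_vlasov_characteristic hf hVlasov hXV (hsub hs) ht₀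
    _ = f s 0 (V s) := by rw [hXs]; exact hper.int_mul_eq k
    _ = 0 := hwindow s hs (V s) hVs

theorem integral_sq_mul_partialT_eq {f : ℝ → ℝ → ℝ → ℝ} {E : ℝ → ℝ → ℝ} {t x R : ℝ}
    (hf : ContDiff ℝ 1 fun p : ℝ × ℝ × ℝ => f p.1 p.2.1 p.2.2)
    (hR : ∀ v, R ≤ |v| → f t x v = 0)
    (hVlasov : ∀ v, partialT f t x v + v * partialX f t x v - E t x * partialV f t x v = 0)
    (hAmpere : deriv (fun s => E s x) t = ∫ v, v * f t x v) :
    ∫ v in -R..R, v ^ 2 * partialT f t x v =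
      -(2 * E t x * deriv (fun s => E s x) t) - ∫ v in -R..R, v ^ 3 * partialX f t x v := by
  have hslice : Continuous fun w : ℝ => (t, x, w) := by fun_prop
  have hcurrent :
      ∫ v in -R..R, v ^ 2 * partialV f t x v = -(2 * deriv (fun s => E s x) t) := by
    rw [integral_sq_mul_deriv_eq (hasDerivAt_partialV hf t x)
      ((continuous_partialV hf).comp hslice) (hR _ (abs_neg R ▸ le_abs_self R))
      (hR _ (le_abs_self R)), hAmpere,
      integral_eq_intervalIntegral_of_forall_le_abs fun v hv => by rw [hR v hv, mul_zero]]
  calc ∫ v in -R..R, v ^ 2 * partialT f t x v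
      = ∫ v in -R..R, (E t x * (v ^ 2 * partialV f t x v) - v ^ 3 * partialX f t x v) :=
        intervalIntegral.integral_congr fun v _ => by linear_combination v ^ 2 * hVlasov v
    _ = E t x * (∫ v in -R..R, v ^ 2 * partialV f t x v) -
          ∫ v in -R..R, v ^ 3 * partialX f t x v := by
        rw [intervalIntegral.integral_sub, intervalIntegral.integral_const_mul]
        · exact (continuous_const.mul ((continuous_pow 2).mul
            ((continuous_partialV hf).comp hslice))).intervalIntegrable _ _
        · exact ((continuous_pow 3).mul
            ((continuous_partialX hf).comp hslice)).intervalIntegrable _ _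
    _ = _ := by rw [hcurrent]; ring

theorem continuous_intervalIntegral_mul_partialX {f : ℝ → ℝ → ℝ → ℝ}
    (hf : ContDiff ℝ 1 fun p : ℝ × ℝ × ℝ => f p.1 p.2.1 p.2.2) {φ : ℝ → ℝ} (hφ : Continuous φ)
    (t c d : ℝ) : Continuous fun x => ∫ v in c..d, φ v * partialX f t x v :=
  intervalIntegral.continuous_parametric_intervalIntegral_of_continuous'
    ((hφ.comp continuous_snd).mul ((continuous_partialX hf).comp
      (by fun_prop : Continuous fun q : ℝ × ℝ => (t, q.1, q.2)))) c d

theorem intervalIntegral_intervalIntegral_mul_partialX_eq_zero {f : ℝ → ℝ → ℝ → ℝ}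
    (hf : ContDiff ℝ 1 fun p : ℝ × ℝ × ℝ => f p.1 p.2.1 p.2.2)
    (hfper : ∀ t x v, f t (x + 2 * Real.pi) v = f t x v) {φ : ℝ → ℝ} (hφ : Continuous φ)
    (t c d : ℝ) :
    ∫ x in (0 : ℝ)..(2 * Real.pi), ∫ v in c..d, φ v * partialX f t x v = 0 := by
  have hslice : Continuous fun q : ℝ × ℝ => (t, q.1, q.2) := by fun_prop
  refine Periodic.intervalIntegral_deriv_eq_zero (J := fun x => ∫ v in c..d, φ v * f t x v)
    (fun x => by simp only [hfper]) (fun x => ?_)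
    (continuous_intervalIntegral_mul_partialX hf hφ t c d)
  refine hasDerivAt_intervalIntegral_of_continuous (G := fun x v => φ v * f t x v)
    (D := fun x v => φ v * partialX f t x v) ?_ ?_ (fun x v => ?_) x
  · exact (hφ.comp continuous_snd).mul (hf.continuous.comp hslice)
  · exact (hφ.comp continuous_snd).mul ((continuous_partialX hf).comp hslice)
  · exact (hasDerivAt_partialX hf t x v).const_mul _

theorem intervalIntegral_intervalIntegral_sq_mul_partialT_eq {f : ℝ → ℝ → ℝ → ℝ}
    {E : ℝ → ℝ → ℝ} {t R : ℝ} (hf : ContDiff ℝ 1 fun p : ℝ × ℝ × ℝ => f p.1 p.2.1 p.2.2)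
    (hfper : ∀ t x v, f t (x + 2 * Real.pi) v = f t x v)
    (hE : ContDiff ℝ 1 fun p : ℝ × ℝ => E p.1 p.2) (hR : ∀ x v, R ≤ |v| → f t x v = 0)
    (hVlasov : ∀ x v, partialT f t x v + v * partialX f t x v - E t x * partialV f t x v = 0)
    (hAmpere : ∀ x, deriv (fun s => E s x) t = ∫ v, v * f t x v) :
    ∫ x in (0 : ℝ)..(2 * Real.pi), ∫ v in -R..R, v ^ 2 * partialT f t x v =
      -∫ x in (0 : ℝ)..(2 * Real.pi), 2 * E t x * deriv (fun r => E r x) t := by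
  rw [intervalIntegral.integral_congr fun x _ =>
      integral_sq_mul_partialT_eq hf (hR x) (hVlasov x) (hAmpere x),
    intervalIntegral.integral_sub,
    intervalIntegral_intervalIntegral_mul_partialX_eq_zero hf hfper (continuous_pow 3),
    intervalIntegral.integral_neg, sub_zero]
  · exact ((continuous_const.mul (hE.continuous.comp (Continuous.prodMk_right t))).mul
      ((continuous_deriv_fst_of_contDiff hE).comp (Continuous.prodMk_right t))).neg
      |>.intervalIntegrable _ _
  · exact (continuous_intervalIntegral_mul_partialX hf (continuous_pow 3) t _ _)
      |>.intervalIntegrable _ _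

noncomputable def totalEnergy (f : ℝ → ℝ → ℝ → ℝ) (E : ℝ → ℝ → ℝ) (t : ℝ) : ℝ :=
  (1 / 2) * (∫ x in (0 : ℝ)..(2 * Real.pi), ∫ v : ℝ, v ^ 2 * f t x v) +
    (1 / 2) * (∫ x in (0 : ℝ)..(2 * Real.pi), (E t x) ^ 2)

theorem totalEnergy_eq_of_uniform_support {f : ℝ → ℝ → ℝ → ℝ} {E : ℝ → ℝ → ℝ} {T R t : ℝ}
    (hf : ContDiff ℝ 1 fun p : ℝ × ℝ × ℝ => f p.1 p.2.1 p.2.2)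
    (hfper : ∀ t x v, f t (x + 2 * Real.pi) v = f t x v)
    (hE : ContDiff ℝ 1 fun p : ℝ × ℝ => E p.1 p.2)
    (hVlasov : ∀ t ∈ Icc 0 T, ∀ x v,
      partialT f t x v + v * partialX f t x v - E t x * partialV f t x v = 0)
    (hAmpere : ∀ t ∈ Icc 0 T, ∀ x, deriv (fun s => E s x) t = ∫ v, v * f t x v)
    (hR : ∀ t ∈ Icc 0 T, ∀ x v, R ≤ |v| → f t x v = 0) (ht : t ∈ Icc 0 T) :
    totalEnergy f E t = totalEnergy f E 0 := by
  let kinetic s := ∫ x in (0 : ℝ)..(2 * Real.pi), ∫ v in -R..R, v ^ 2 * f s x v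
  let field s := ∫ x in (0 : ℝ)..(2 * Real.pi), E s x ^ 2
  have htrunc : ∀ s ∈ Icc 0 T, totalEnergy f E s = 1 / 2 * kinetic s + 1 / 2 * field s :=
    fun s hs => by
      have hinner : ∀ x, ∫ v, v ^ 2 * f s x v = ∫ v in -R..R, v ^ 2 * f s x v := fun x =>
        integral_eq_intervalIntegral_of_forall_le_abs fun v hv => by
          rw [hR s hs x v hv, mul_zero]
      simp only [totalEnergy, kinetic, field, hinner]
  have hkinetic : ∀ s, HasDerivAt kinetic
      (∫ x in (0 : ℝ)..(2 * Real.pi), ∫ v in -R..R, v ^ 2 * partialT f s x v) s :=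
    hasDerivAt_intervalIntegral_intervalIntegral_of_continuous
      ((continuous_snd.snd.pow 2).mul hf.continuous)
      ((continuous_snd.snd.pow 2).mul (continuous_partialT hf))
      fun s x v => (hasDerivAt_partialT hf s x v).const_mul _
  have h0 : (0 : ℝ) ∈ Icc 0 T := ⟨le_rfl, ht.1.trans ht.2⟩
  rw [htrunc t ht, htrunc 0 h0]
  refine eq_of_hasDerivWithinAt_zero (g := fun s => 1 / 2 * kinetic s + 1 / 2 * field s)
    (fun s hs => ?_) h0 ht
  refine (((hkinetic s).const_mul _).add
    ((hasDerivAt_intervalIntegral_sq hE _ _ s).const_mul _)).hasDerivWithinAt.congr_deriv ?_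
  rw [intervalIntegral_intervalIntegral_sq_mul_partialT_eq hf hfper hE (hR s hs) (hVlasov s hs)
    (hAmpere s hs)]
  ring

/-- If `f` is continuously differentiable, `2π`-periodic in `x`, compactly supported in
`v`, `E` is continuously differentiable and `2π`-periodic in `x`, `f` satisfies the
Vlasov equation `∂f/∂t + v ∂f/∂x - E(t,x) ∂f/∂v = 0` and `E` the Ampère law
`∂E/∂t(t,x) = ∫ v f(t,x,v) dv` on `[0,T]`, then the total energy
`𝓔(t) = (1/2) ∫₀^{2π} ∫_ℝ v² f dv dx + (1/2) ∫₀^{2π} E² dx` is constant on `[0,T]`. -/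
theorem vlasov_total_energy_conservation
    (T : ℝ) (hT : 0 ≤ T) (f : ℝ → ℝ → ℝ → ℝ) (E : ℝ → ℝ → ℝ)
    (hf : ContDiff ℝ 1 (fun p : ℝ × ℝ × ℝ => f p.1 p.2.1 p.2.2))
    (hfper : ∀ t x v : ℝ, f t (x + 2 * Real.pi) v = f t x v)
    (hsupp : ∀ t x : ℝ, HasCompactSupport (fun v => f t x v))
    (hE : ContDiff ℝ 1 (fun p : ℝ × ℝ => E p.1 p.2))
    (hEper : ∀ t x : ℝ, E t (x + 2 * Real.pi) = E t x)
    (hVlasov : ∀ t ∈ Set.Icc (0 : ℝ) T, ∀ x v : ℝ,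
      deriv (fun s => f s x v) t + v * deriv (fun y => f t y v) x
        - E t x * deriv (fun w => f t x w) v = 0)
    (hAmpere : ∀ t ∈ Set.Icc (0 : ℝ) T, ∀ x : ℝ,
      deriv (fun s => E s x) t = ∫ v : ℝ, v * f t x v) :
    ∀ t ∈ Set.Icc (0 : ℝ) T,
      (1 / 2) * (∫ x in (0 : ℝ)..(2 * Real.pi), ∫ v : ℝ, v ^ 2 * f t x v) +
          (1 / 2) * (∫ x in (0 : ℝ)..(2 * Real.pi), (E t x) ^ 2) =
        (1 / 2) * (∫ x in (0 : ℝ)..(2 * Real.pi), ∫ v : ℝ, v ^ 2 * f 0 x v) +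
          (1 / 2) * (∫ x in (0 : ℝ)..(2 * Real.pi), (E 0 x) ^ 2) := by
  intro t ht
  rcases hT.eq_or_lt with rfl | hTpos
  · rw [le_antisymm ht.2 ht.1]
  obtain ⟨R, hR⟩ := exists_uniform_velocity_support hTpos hf hfper hsupp hE hEper hVlasov
  exact totalEnergy_eq_of_uniform_support hf hfper hE hVlasov hAmpere hR ht
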